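/- arXiv:1205.4118 — 10 statements merged into one kernel-verified Lean document; each statement's English description precedes it below -/
import Mathlib

section
/- Let S be a numerical semigroup with multiplicity n_1 (smallest nonzero element) and maximal ideal M = S \ {0}. Define T = {s ∈ S : there exists c > 0 with ord(s + c·n_1) > ord(s) + c}. For s ∈ T, if c = tord(s) := min{c > 0 : ord(s + c·n_1) > ord(s) + c} and s + c·n_1 = s_1 n_1 + ... + s_b n_b is a maximal expression, then s_1 = 0. -/
open Finset

/-- Membership in the numerical semigroup generated by `n`. -/
def memS {b : ℕ} (n : Fin b → ℕ) (s : ℕ) : Prop :=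
  ∃ r : Fin b → ℕ, ∑ i, r i * n i = s

/-- The order of `s`: the largest number of generators (with repetition) summing to `s`. -/
noncomputable def ord {b : ℕ} (n : Fin b → ℕ) (s : ℕ) : ℕ :=
  sSup {k | ∃ r : Fin b → ℕ, (∑ i, r i * n i = s) ∧ ∑ i, r i = k}

/-- `r` is a maximal expression of `s`. -/
def IsMaxExpr {b : ℕ} (n : Fin b → ℕ) (s : ℕ) (r : Fin b → ℕ) : Prop :=
  (∑ i, r i * n i = s) ∧ ∑ i, r i = ord n s

/-- `s` is a torsion element: `ord (s + c·n₁) > ord s + c` for some `c > 0`. -/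
def Torsion {b : ℕ} [NeZero b] (n : Fin b → ℕ) (s : ℕ) : Prop :=
  ∃ c, 0 < c ∧ ord n s + c < ord n (s + c * n 0)

/-- The torsion order: least `c > 0` with `ord (s + c·n₁) > ord s + c`. -/
noncomputable def tord {b : ℕ} [NeZero b] (n : Fin b → ℕ) (s : ℕ) : ℕ :=
  sInf {c | 0 < c ∧ ord n s + c < ord n (s + c * n 0)}

/-- `n` is a minimal system of generators of a numerical semigroup,
listed increasingly. -/
def MinGen {b : ℕ} (n : Fin b → ℕ) : Prop :=
  StrictMono n ∧ (∀ i, 1 < n i) ∧ Finset.univ.gcd n = 1 ∧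
  ∀ i, ¬ ∃ r : Fin b → ℕ, r i = 0 ∧ ∑ j, r j * n j = n i

/-- The Apéry set of the semigroup generated by `n` with respect to `ν`. -/
def Ap {b : ℕ} (n : Fin b → ℕ) (ν : ℕ) : Set ℕ :=
  {s | memS n s ∧ ¬ ∃ t, memS n t ∧ t + ν = s}

/-- The `k`-fold sumset `kM` of the maximal ideal `M = S \ {0}`:
the elements of order at least `k`. -/
def powM {b : ℕ} (n : Fin b → ℕ) (k : ℕ) : Set ℕ :=
  {s | ∃ r : Fin b → ℕ, k ≤ ∑ i, r i ∧ ∑ i, r i * n i = s}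

/-- The reduction number: least `r` with `(r+1)M = n₁ + rM`. -/
noncomputable def redNum {b : ℕ} [NeZero b] (n : Fin b → ℕ) : ℕ :=
  sInf {r | powM n (r + 1) = (fun t => n 0 + t) '' powM n r}

lemma ord_ge {b : ℕ} (n : Fin b → ℕ) (hn : ∀ i, 1 < n i) (s : ℕ) (r : Fin b → ℕ)
    (hr : ∑ i, r i * n i = s) : ∑ i, r i ≤ ord n s := by
  have hbdd : BddAbove {k | ∃ r : Fin b → ℕ, (∑ i, r i * n i = s) ∧ ∑ i, r i = k} := by
    refine ⟨s, fun k hk => ?_⟩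
    obtain ⟨r', hr', hk⟩ := hk
    calc k = ∑ i, r' i := hk.symm
    _ ≤ ∑ i, r' i * n i := Finset.sum_le_sum fun i _ =>
        Nat.le_mul_of_pos_right _ (lt_trans one_pos (hn i))
    _ = s := hr'
  exact le_csSup hbdd ⟨r, hr, rfl⟩

theorem stmt2 {b : ℕ} [NeZero b] (n : Fin b → ℕ) (hmin : MinGen n) (s : ℕ)
    (hs : Torsion n s) (sc : Fin b → ℕ)
    (hsc : IsMaxExpr n (s + tord n s * n 0) sc) : sc 0 = 0 := by
  obtain ⟨-, hgt1, -, -⟩ := hmin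
  have hcmem : 0 < tord n s ∧ ord n s + tord n s < ord n (s + tord n s * n 0) :=
    Nat.sInf_mem hs
  set c := tord n s with hc
  clear_value c
  by_contra h0
  have hpos : 0 < sc 0 := Nat.pos_of_ne_zero h0
  set r' : Fin b → ℕ := Function.update sc 0 (sc 0 - 1) with hr'
  set E := ∑ i ∈ Finset.univ \ {(0 : Fin b)}, sc i * n i with hEdef
  set F := ∑ i ∈ Finset.univ \ {(0 : Fin b)}, sc i with hFdef
  have h1 : ∑ i, r' i * n i = (sc 0 - 1) * n 0 + E := by
    have hfun : ∀ x, r' x * n x =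
        Function.update (fun x => sc x * n x) 0 ((sc 0 - 1) * n 0) x := by
      intro x
      by_cases hx : x = 0
      · subst hx; simp [hr']
      · simp [hr', hx]
    rw [Finset.sum_congr rfl fun i _ => hfun i]
    exact Finset.sum_update_of_mem (Finset.mem_univ (0 : Fin b)) _ _
  have h2 : sc 0 * n 0 + E = s + c * n 0 := by
    have h := Finset.add_sum_erase Finset.univ (fun i => sc i * n i)
      (Finset.mem_univ (0 : Fin b))
    rw [Finset.erase_eq] at h
    rw [hEdef]
    exact h.trans hsc.1
  have h1' : ∑ i, r' i = (sc 0 - 1) + F := by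
    rw [hr']
    exact Finset.sum_update_of_mem (Finset.mem_univ (0 : Fin b)) _ _
  have h2' : sc 0 + F = ord n (s + c * n 0) := by
    have h := Finset.add_sum_erase Finset.univ sc (Finset.mem_univ (0 : Fin b))
    rw [Finset.erase_eq] at h
    rw [hFdef]
    exact h.trans hsc.2
  have hmul : (sc 0 - 1) * n 0 + n 0 = sc 0 * n 0 := by
    conv_rhs => rw [show sc 0 = (sc 0 - 1) + 1 from by omega]
    ring
  have hmul2 : (c - 1) * n 0 + n 0 = c * n 0 := by
    conv_rhs => rw [show c = (c - 1) + 1 from by omega]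
    ring
  have hexpr : ∑ i, r' i * n i = s + (c - 1) * n 0 := by omega
  have hord : ∑ i, r' i ≤ ord n (s + (c - 1) * n 0) := ord_ge n hgt1 _ _ hexpr
  rcases Nat.lt_or_ge 1 c with hc2 | hc1
  · have hmem : c - 1 ∈ {c | 0 < c ∧ ord n s + c < ord n (s + c * n 0)} :=
      ⟨by omega, by omega⟩
    have hle : tord n s ≤ c - 1 := Nat.sInf_le hmem
    omega
  · have hc1' : c = 1 := le_antisymm hc1 hcmem.1
    rw [hc1'] at hord
    simp at hord
    omega
end

section
/- Let S be a numerical semigroup minimally generated by n_1 < ... < n_b. If s ∈ T (i.e., ord(s + c·n_1) > ord(s) + c for some c > 0) and s = r_1 n_1 + ... + r_b n_b is a maximal expression, then r_3 + r_4 + ... + r_b ≠ 0. In particular, no element of the form r_1 n_1 + r_2 n_2 (maximal expression) is a torsion element. -/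
open Finset

theorem stmt3 {b : ℕ} [NeZero b] (hb : 2 ≤ b) (n : Fin b → ℕ) (hmin : MinGen n)
    (x : ℕ) (hx : Torsion n x) (r : Fin b → ℕ) (hr : IsMaxExpr n x r) :
    ∑ i ∈ Finset.univ.filter (fun i : Fin b => 2 ≤ (i : ℕ)), r i ≠ 0 := by
  intro hzero
  obtain ⟨hsm, hpos, -, -⟩ := hmin
  obtain ⟨hrx, hrord⟩ := hr
  obtain ⟨c, hc, hlt⟩ := hx
  have hb1 : (1 : ℕ) < b := hb
  set i1 : Fin b := ⟨1, hb1⟩ with hi1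
  have hv0 : ((0 : Fin b) : ℕ) = 0 := rfl
  have hvi1 : ((i1 : Fin b) : ℕ) = 1 := rfl
  have h01 : (0 : Fin b) ≠ i1 := by
    intro h
    have := congrArg Fin.val h
    rw [hv0, hvi1] at this
    omega
  have h0i1 : (0 : Fin b) < i1 := by
    rw [Fin.lt_def, hv0, hvi1]; omega
  -- r vanishes for i with val ≥ 2
  have hr2 : ∀ i : Fin b, 2 ≤ (i : ℕ) → r i = 0 := by
    intro i hi
    exact (Finset.sum_eq_zero_iff.mp hzero) i (by simp [hi])
  have hoff : ∀ i : Fin b, i ≠ 0 → i ≠ i1 → 2 ≤ (i : ℕ) := by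
    intro i h0 h1
    have hvne0 : (i : ℕ) ≠ 0 := fun h => h0 (Fin.ext (by rw [h, hv0]))
    have hvne1 : (i : ℕ) ≠ 1 := fun h => h1 (Fin.ext (by rw [h, hvi1]))
    omega
  -- x = r 0 * n 0 + r i1 * n i1
  have hxeq : r 0 * n 0 + r i1 * n i1 = x := by
    rw [← hrx]
    have hp : ∑ i ∈ ({0, i1} : Finset (Fin b)), r i * n i = r 0 * n 0 + r i1 * n i1 :=
      Finset.sum_pair h01
    rw [← hp]
    apply Finset.sum_subset (Finset.subset_univ _)
    intro i _ hi
    simp only [Finset.mem_insert, Finset.mem_singleton, not_or] at hi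
    simp [hr2 i (hoff i hi.1 hi.2)]
  have hsum : r 0 + r i1 = ord n x := by
    rw [← hrord]
    have hp : ∑ i ∈ ({0, i1} : Finset (Fin b)), r i = r 0 + r i1 := Finset.sum_pair h01
    rw [← hp]
    apply Finset.sum_subset (Finset.subset_univ _)
    intro i _ hi
    simp only [Finset.mem_insert, Finset.mem_singleton, not_or] at hi
    exact hr2 i (hoff i hi.1 hi.2)
  set A := r 0 with hA
  set B := r i1 with hB
  -- boundedness of order sets
  have hbdd : ∀ s : ℕ, BddAbove {k | ∃ t : Fin b → ℕ, (∑ i, t i * n i = s) ∧ ∑ i, t i = k} := by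
    intro s
    refine ⟨s, ?_⟩
    rintro k ⟨t, ht, rfl⟩
    calc ∑ i, t i ≤ ∑ i, t i * n i := by
          apply Finset.sum_le_sum
          intro i _
          exact Nat.le_mul_of_pos_right _ (by have := hpos i; omega)
      _ = s := ht
  -- a maximal expression of x + c * n 0
  have hne : {k | ∃ t : Fin b → ℕ, (∑ i, t i * n i = x + c * n 0) ∧ ∑ i, t i = k}.Nonempty := by
    refine ⟨A + B + c, fun i => if i = 0 then r 0 + c else r i, ?_, ?_⟩
    · rw [← Finset.add_sum_erase _ (fun i => (if i = 0 then r 0 + c else r i) * n i)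
        (Finset.mem_univ 0)]
      rw [← Finset.add_sum_erase _ (fun i => r i * n i) (Finset.mem_univ 0)] at hrx
      have heq : ∑ i ∈ Finset.univ.erase 0, (if i = 0 then r 0 + c else r i) * n i
          = ∑ i ∈ Finset.univ.erase 0, r i * n i := by
        apply Finset.sum_congr rfl
        intro i hi
        rw [if_neg (Finset.ne_of_mem_erase hi)]
      rw [heq, if_pos rfl, add_mul]
      omega
    · rw [← Finset.add_sum_erase _ (fun i => if i = 0 then r 0 + c else r i)
        (Finset.mem_univ 0)]
      rw [← Finset.add_sum_erase _ r (Finset.mem_univ 0)] at hrord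
      have heq : ∑ i ∈ Finset.univ.erase 0, (if i = 0 then r 0 + c else r i)
          = ∑ i ∈ Finset.univ.erase 0, r i := by
        apply Finset.sum_congr rfl
        intro i hi
        rw [if_neg (Finset.ne_of_mem_erase hi)]
      rw [heq, if_pos rfl]
      omega
  obtain ⟨t, hteq, htsum⟩ := Nat.sSup_mem hne (hbdd _)
  have hK : A + B + c < ∑ i, t i := by
    rw [htsum]
    exact lt_of_le_of_lt (Nat.add_le_add_right hsum.le c) hlt
  clear htsum hne
  -- split sums at 0
  set E := ∑ i ∈ Finset.univ.erase 0, t i * n i with hE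
  set Te := ∑ i ∈ Finset.univ.erase 0, t i with hTe
  have hsplit1 : t 0 * n 0 + E = x + c * n 0 := by
    rw [hE, Finset.add_sum_erase _ (fun i => t i * n i) (Finset.mem_univ 0)]
    exact hteq
  have hsplit2 : t 0 + Te = ∑ i, t i := by
    rw [hTe, Finset.add_sum_erase _ t (Finset.mem_univ 0)]
  by_cases hct : c ≤ t 0
  · -- reduce: get an expression of x with too many terms
    obtain ⟨u, hu⟩ := Nat.le.dest hct
    have hmem : u + Te ∈ {k | ∃ t : Fin b → ℕ, (∑ i, t i * n i = x) ∧ ∑ i, t i = k} := by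
      refine ⟨fun i => if i = 0 then u else t i, ?_, ?_⟩
      · rw [← Finset.add_sum_erase _ (fun i => (if i = 0 then u else t i) * n i)
          (Finset.mem_univ 0)]
        have heq : ∑ i ∈ Finset.univ.erase 0, (if i = 0 then u else t i) * n i = E := by
          rw [hE]
          apply Finset.sum_congr rfl
          intro i hi
          rw [if_neg (Finset.ne_of_mem_erase hi)]
        rw [heq, if_pos rfl]
        have h2 : (c + u) * n 0 + E = x + c * n 0 := by rw [hu]; exact hsplit1
        rw [add_mul] at h2
        omega
      · rw [← Finset.add_sum_erase _ (fun i => if i = 0 then u else t i) (Finset.mem_univ 0)]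
        have heq : ∑ i ∈ Finset.univ.erase 0, (if i = 0 then u else t i) = Te := by
          rw [hTe]
          apply Finset.sum_congr rfl
          intro i hi
          rw [if_neg (Finset.ne_of_mem_erase hi)]
        rw [heq, if_pos rfl]
    have hle : u + Te ≤ ord n x := le_csSup (hbdd x) hmem
    rw [← hsum] at hle
    omega
  · -- t 0 < c : numeric contradiction using n i ≥ n i1 for i ≠ 0
    push_neg at hct
    have hEge : Te * n i1 ≤ E := by
      rw [hTe, hE, Finset.sum_mul]
      apply Finset.sum_le_sum
      intro i hi
      apply Nat.mul_le_mul_left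
      apply hsm.monotone
      rw [Fin.le_def, hvi1]
      have h0 : i ≠ 0 := Finset.ne_of_mem_erase hi
      have : (i : ℕ) ≠ 0 := fun h => h0 (Fin.ext (by rw [h, hv0]))
      omega
    obtain ⟨d, hd⟩ := Nat.exists_eq_add_of_lt hct
    have hTege : A + B + d + 2 ≤ Te := by omega
    have h1 : (A + B + d + 2) * n i1 ≤ Te * n i1 := Nat.mul_le_mul_right _ hTege
    have e1 : (A + B + d + 2) * n i1 = A * n i1 + B * n i1 + d * n i1 + 2 * n i1 := by ring
    have e2 : c * n 0 = t 0 * n 0 + d * n 0 + n 0 := by rw [hd]; ring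
    have hn01 : n 0 < n i1 := hsm h0i1
    have hA1 : A * n 0 ≤ A * n i1 := Nat.mul_le_mul_left _ (le_of_lt hn01)
    have hd1 : d * n 0 ≤ d * n i1 := Nat.mul_le_mul_left _ (le_of_lt hn01)
    have hxx : A * n 0 + B * n i1 + c * n 0 = t 0 * n 0 + E := by omega
    have hn1pos : 0 < n i1 := by have := hpos i1; omega
    omega
end

section
/- Let S be a numerical semigroup minimally generated by n_1 < n_2 < n_3 (embedding dimension 3). Suppose s ∈ T with c = tord(s), s = r_1 n_1 + r_2 n_2 + r_3 n_3 a maximal expression, and s + c·n_1 = s_1 n_1 + s_2 n_2 + s_3 n_3 a maximal expression. Then s_1 = 0, r_3 ≠ 0, and s_2 > r_2. -/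
open Finset

/-- Any expression of `t` has at most `ord n t` summands. -/
theorem ord_lower_aux {b : ℕ} (n : Fin b → ℕ) (hn : ∀ i, 0 < n i) (t : ℕ) (q : Fin b → ℕ)
    (h : ∑ i, q i * n i = t) : ∑ i, q i ≤ ord n t := by
  apply le_csSup
  · refine ⟨t, fun k hk => ?_⟩
    obtain ⟨q', hq1, hq2⟩ := hk
    calc k = ∑ i, q' i := hq2.symm
      _ ≤ ∑ i, q' i * n i := Finset.sum_le_sum fun i _ => Nat.le_mul_of_pos_right _ (hn i)
      _ = t := hq1
  · exact ⟨q, h, rfl⟩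

theorem stmt5 (n : Fin 3 → ℕ) (hmin : MinGen n) (s : ℕ) (hs : Torsion n s)
    (r sc : Fin 3 → ℕ) (hr : IsMaxExpr n s r)
    (hsc : IsMaxExpr n (s + tord n s * n 0) sc) :
    sc 0 = 0 ∧ r 2 ≠ 0 ∧ r 1 < sc 1 := by
  obtain ⟨hmono, hone, -, -⟩ := hmin
  have hn : ∀ i, 0 < n i := fun i => lt_trans Nat.zero_lt_one (hone i)
  have h01 : n 0 < n 1 := hmono (by decide)
  have h12 : n 1 < n 2 := hmono (by decide)
  have hne : {c | 0 < c ∧ ord n s + c < ord n (s + c * n 0)}.Nonempty := hs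
  have hc : tord n s ∈ {c | 0 < c ∧ ord n s + c < ord n (s + c * n 0)} := Nat.sInf_mem hne
  obtain ⟨hcpos, hcord⟩ := hc
  obtain ⟨hrv, hro⟩ := hr
  obtain ⟨hscv, hsco⟩ := hsc
  simp only [Fin.sum_univ_three] at hrv hro hscv hsco
  -- upper bound for ord at tord - 1
  have hub : ord n (s + (tord n s - 1) * n 0) ≤ ord n s + (tord n s - 1) := by
    rcases Nat.eq_zero_or_pos (tord n s - 1) with h | h
    · rw [h]; simp
    · have hnm : (tord n s - 1) ∉ {c | 0 < c ∧ ord n s + c < ord n (s + c * n 0)} :=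
        Nat.notMem_of_lt_sInf (show tord n s - 1 < tord n s by omega)
      simp only [Set.mem_setOf_eq, not_and, not_lt] at hnm
      exact hnm h
  -- Step 1: sc 0 = 0
  have hsc0 : sc 0 = 0 := by
    by_contra h0
    obtain ⟨k, hk⟩ : ∃ k, sc 0 = k + 1 := ⟨sc 0 - 1, by omega⟩
    rw [hk] at hscv hsco
    have hv2 : k * n 0 + sc 1 * n 1 + sc 2 * n 2 = s + (tord n s - 1) * n 0 := by
      have e1 : (k + 1) * n 0 = k * n 0 + n 0 := by ring
      have e2 : (tord n s - 1) * n 0 = tord n s * n 0 - 1 * n 0 := by rw [Nat.sub_mul]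
      have e3 : n 0 ≤ tord n s * n 0 := Nat.le_mul_of_pos_left _ hcpos
      omega
    have hlow : k + sc 1 + sc 2 ≤ ord n (s + (tord n s - 1) * n 0) := by
      have := ord_lower_aux n hn (s + (tord n s - 1) * n 0) ![k, sc 1, sc 2]
        (by simpa [Fin.sum_univ_three] using hv2)
      simpa [Fin.sum_univ_three] using this
    omega
  rw [hsc0] at hscv hsco
  simp only [Nat.zero_mul, Nat.zero_add, zero_mul, zero_add] at hscv hsco
  -- Step 2: r 2 ≠ 0
  have hr2 : r 2 ≠ 0 := by
    intro h2
    rw [h2] at hrv hro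
    -- sc1*n1 + sc2*n2 = s + c*n0, s = r0*n0 + r1*n1
    have hb1 : r 0 * n 0 ≤ r 0 * n 1 := Nat.mul_le_mul_left _ h01.le
    have hb2 : tord n s * n 0 ≤ tord n s * n 1 := Nat.mul_le_mul_left _ h01.le
    have hb3 : sc 2 * n 1 ≤ sc 2 * n 2 := Nat.mul_le_mul_left _ h12.le
    have hb4 : (r 0 + r 1 + tord n s + 1) * n 1 ≤ (sc 1 + sc 2) * n 1 :=
      Nat.mul_le_mul_right _ (by omega)
    have hexp : (r 0 + r 1 + tord n s + 1) * n 1 =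
        r 0 * n 1 + r 1 * n 1 + tord n s * n 1 + n 1 := by ring
    have hexp2 : (sc 1 + sc 2) * n 1 = sc 1 * n 1 + sc 2 * n 1 := by ring
    have hn1 : 0 < n 1 := hn 1
    omega
  -- Step 3: r 1 < sc 1
  have hr1 : r 1 < sc 1 := by
    by_contra h1
    push_neg at h1
    obtain ⟨u, hu⟩ : ∃ u, r 1 = sc 1 + u := ⟨r 1 - sc 1, by omega⟩
    rw [hu] at hrv hro
    have hb1 : (r 0 + tord n s) * n 0 ≤ (r 0 + tord n s) * n 2 :=
      Nat.mul_le_mul_left _ (by omega)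
    have hb2 : u * n 1 ≤ u * n 2 := Nat.mul_le_mul_left _ h12.le
    have hb3 : (r 0 + tord n s + u + r 2 + 1) * n 2 ≤ sc 2 * n 2 :=
      Nat.mul_le_mul_right _ (by omega)
    have hexp0 : (r 0 + tord n s) * n 0 = r 0 * n 0 + tord n s * n 0 := by ring
    have hexp1 : (sc 1 + u) * n 1 = sc 1 * n 1 + u * n 1 := by ring
    have hexp2 : (r 0 + tord n s + u + r 2 + 1) * n 2 =
        (r 0 + tord n s) * n 2 + u * n 2 + r 2 * n 2 + n 2 := by ring
    have hn2 : 0 < n 2 := hn 2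
    omega
  exact ⟨hsc0, hr2, hr1⟩
end

section
/- Let S be a numerical semigroup minimally generated by n_1 < n_2 < n_3. Suppose k·n_3 and k·n_3 + h'·n_2 are both maximal expressions for some k, h' ≥ 1. Then k·n_3 ∈ T if and only if k·n_3 + h'·n_2 ∈ T, and in that case tord(k·n_3) = tord(k·n_3 + h'·n_2). -/
open Finset

section Aux

variable {n : Fin 3 → ℕ}

lemma myBdd (hpos : ∀ i, 0 < n i) (s : ℕ) :
    BddAbove {k | ∃ r : Fin 3 → ℕ, (∑ i, r i * n i = s) ∧ ∑ i, r i = k} := by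
  refine ⟨s, fun L hL => ?_⟩
  obtain ⟨r, h1, h2⟩ := hL
  calc L = ∑ i, r i := h2.symm
  _ ≤ ∑ i, r i * n i := Finset.sum_le_sum (fun i _ => Nat.le_mul_of_pos_right _ (hpos i))
  _ = s := h1

lemma my_le_ord (hpos : ∀ i, 0 < n i) {s : ℕ} {r : Fin 3 → ℕ}
    (hr : ∑ i, r i * n i = s) : ∑ i, r i ≤ ord n s :=
  le_csSup (myBdd hpos s) ⟨r, hr, rfl⟩

lemma my_exists_max (hpos : ∀ i, 0 < n i) {s : ℕ} (r₀ : Fin 3 → ℕ)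
    (h₀ : ∑ i, r₀ i * n i = s) :
    ∃ r : Fin 3 → ℕ, (∑ i, r i * n i = s) ∧ ∑ i, r i = ord n s := by
  have hmem : (∑ i, r₀ i) ∈ {k | ∃ r : Fin 3 → ℕ, (∑ i, r i * n i = s) ∧ ∑ i, r i = k} :=
    ⟨r₀, h₀, rfl⟩
  exact Nat.sSup_mem ⟨_, hmem⟩ (myBdd hpos s)

end Aux

lemma my_key {n : Fin 3 → ℕ} (hmono : StrictMono n) (hpos : ∀ i, 0 < n i) (k h' : ℕ)
    (h2 : ord n (k * n 2 + h' * n 1) = k + h') (c : ℕ) :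
    ord n (k * n 2 + h' * n 1 + c * n 0) = ord n (k * n 2 + c * n 0) + h' := by
  have N01 : n 0 < n 1 := hmono (by decide)
  have N12 : n 1 < n 2 := hmono (by decide)
  have w1 : ∑ i, (![c, 0, k] : Fin 3 → ℕ) i * n i = k * n 2 + c * n 0 := by
    simp [Fin.sum_univ_three]; ring
  have w2 : ∑ i, (![c, h', k] : Fin 3 → ℕ) i * n i = k * n 2 + h' * n 1 + c * n 0 := by
    simp [Fin.sum_univ_three]; ring
  have hkc : k + c ≤ ord n (k * n 2 + c * n 0) := by
    have := my_le_ord hpos w1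
    simp [Fin.sum_univ_three] at this
    omega
  refine le_antisymm ?_ ?_
  · by_contra hcon
    push_neg at hcon
    obtain ⟨r, hr, hrl⟩ := my_exists_max hpos _ w2
    simp only [Fin.sum_univ_three] at hr hrl
    have hL : ord n (k * n 2 + c * n 0) + h' + 1 ≤ r 0 + r 1 + r 2 := by omega
    by_cases hb : h' ≤ r 1
    · obtain ⟨b', hb'⟩ : ∃ b', r 1 = b' + h' := ⟨r 1 - h', by omega⟩
      have hw : ∑ i, (![r 0, b', r 2] : Fin 3 → ℕ) i * n i = k * n 2 + c * n 0 := by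
        rw [hb'] at hr
        simp [Fin.sum_univ_three]
        linarith [hr]
      have := my_le_ord hpos hw
      simp [Fin.sum_univ_three] at this
      omega
    · by_cases ha : c ≤ r 0
      · obtain ⟨u, hu⟩ : ∃ u, r 0 = c + u := ⟨r 0 - c, by omega⟩
        have hw : ∑ i, (![u, r 1, r 2] : Fin 3 → ℕ) i * n i = k * n 2 + h' * n 1 := by
          rw [hu] at hr
          simp [Fin.sum_univ_three]
          linarith [hr]
        have := my_le_ord hpos hw
        simp [Fin.sum_univ_three, h2] at this
        omega
      · push_neg at ha hb
        have hrZ : (r 0 : ℤ) * n 0 + r 1 * n 1 + r 2 * n 2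
            = k * n 2 + h' * n 1 + c * n 0 := by exact_mod_cast hr
        have hXpos : (1:ℤ) ≤ (c:ℤ) - r 0 := by omega
        have hYpos : (1:ℤ) ≤ (h':ℤ) - r 1 := by omega
        have hZ : ((c:ℤ) - r 0) + ((h':ℤ) - r 1) + 1 ≤ (r 2:ℤ) - k := by omega
        have hval : ((r 2:ℤ) - k) * n 2 = ((c:ℤ) - r 0) * n 0 + ((h':ℤ) - r 1) * n 1 := by
          linarith [hrZ]
        have c1 : (0:ℤ) ≤ ((c:ℤ) - r 0) * ((n 2:ℤ) - n 0) :=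
          mul_nonneg (by linarith) (by omega)
        have c2 : (0:ℤ) ≤ ((h':ℤ) - r 1) * ((n 2:ℤ) - n 1) :=
          mul_nonneg (by linarith) (by omega)
        have c3 : (0:ℤ) ≤ ((r 2:ℤ) - k - (((c:ℤ) - r 0) + ((h':ℤ) - r 1) + 1)) * n 2 :=
          mul_nonneg (by linarith) (by positivity)
        have hn2 : (0:ℤ) < (n 2 : ℤ) := by exact_mod_cast hpos 2
        linarith [c1, c2, c3, hval, hn2]
  · obtain ⟨r, hr, hrl⟩ := my_exists_max hpos _ w1
    simp only [Fin.sum_univ_three] at hr hrl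
    have hw : ∑ i, (![r 0, r 1 + h', r 2] : Fin 3 → ℕ) i * n i
        = k * n 2 + h' * n 1 + c * n 0 := by
      simp [Fin.sum_univ_three]
      linarith [hr]
    have := my_le_ord hpos hw
    simp [Fin.sum_univ_three] at this
    omega

theorem stmt6 (n : Fin 3 → ℕ) (hmin : MinGen n) (k h' : ℕ) (hk : 1 ≤ k)
    (hh : 1 ≤ h') (h1 : ord n (k * n 2) = k)
    (h2 : ord n (k * n 2 + h' * n 1) = k + h') :
    (Torsion n (k * n 2) ↔ Torsion n (k * n 2 + h' * n 1)) ∧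
    (Torsion n (k * n 2) → tord n (k * n 2) = tord n (k * n 2 + h' * n 1)) := by
  have hpos : ∀ i, 0 < n i := fun i => lt_trans Nat.one_pos (hmin.2.1 i)
  have key := fun c => my_key hmin.1 hpos k h' h2 c
  have hset : {c | 0 < c ∧ ord n (k * n 2) + c < ord n (k * n 2 + c * n 0)} =
      {c | 0 < c ∧ ord n (k * n 2 + h' * n 1) + c
        < ord n (k * n 2 + h' * n 1 + c * n 0)} := by
    ext c
    simp only [Set.mem_setOf_eq, h1, h2, key c]
    omega
  refine ⟨?_, fun _ => ?_⟩
  · constructor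
    · rintro ⟨c, hc, hlt⟩
      refine ⟨c, hc, ?_⟩
      rw [h1] at hlt
      rw [h2, key c]
      omega
    · rintro ⟨c, hc, hlt⟩
      rw [h2, key c] at hlt
      refine ⟨c, hc, ?_⟩
      rw [h1]
      omega
  · show sInf _ = sInf _
    exact congrArg sInf hset
end

section
/- Let S be a numerical semigroup minimally generated by n_1 < n_2 < n_3. If k·n_3 and k'·n_3 are both maximal expressions with 1 ≤ k < k', and k·n_3 ∈ T, then k'·n_3 ∈ T and tord(k'·n_3) ≤ tord(k·n_3). -/
open Finset

lemma ordSet_bdd {b : ℕ} (n : Fin b → ℕ) (hn : ∀ i, 1 ≤ n i) (s : ℕ) :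
    BddAbove {k | ∃ r : Fin b → ℕ, (∑ i, r i * n i = s) ∧ ∑ i, r i = k} := by
  refine ⟨s, fun m hm => ?_⟩
  obtain ⟨r, hr, hm⟩ := hm
  subst hm
  calc ∑ i, r i ≤ ∑ i, r i * n i :=
        Finset.sum_le_sum fun i _ => Nat.le_mul_of_pos_right _ (hn i)
    _ = s := hr

lemma ord_add_shift (n : Fin 3 → ℕ) (hn : ∀ i, 1 ≤ n i) (s t : ℕ) (j : Fin 3)
    (hne : ∃ r : Fin 3 → ℕ, ∑ i, r i * n i = s) :
    ord n s + t ≤ ord n (s + t * n j) := by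
  obtain ⟨r0, hr0⟩ := hne
  have hne' : ({k | ∃ r : Fin 3 → ℕ, (∑ i, r i * n i = s) ∧ ∑ i, r i = k}).Nonempty :=
    ⟨∑ i, r0 i, r0, hr0, rfl⟩
  have hmem : ord n s ∈ {k | ∃ r : Fin 3 → ℕ, (∑ i, r i * n i = s) ∧ ∑ i, r i = k} :=
    Nat.sSup_mem hne' (ordSet_bdd n hn s)
  obtain ⟨r, hr, hsum⟩ := hmem
  have : ord n s + t ∈ {k | ∃ r : Fin 3 → ℕ, (∑ i, r i * n i = s + t * n j) ∧ ∑ i, r i = k} := by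
    refine ⟨fun i => r i + if i = j then t else 0, ?_, ?_⟩
    · simp [add_mul, Finset.sum_add_distrib, hr, ite_mul, Finset.sum_ite_eq]
    · simp [Finset.sum_add_distrib, hsum, Finset.sum_ite_eq]
  exact le_csSup (ordSet_bdd n hn _) this

theorem stmt7 (n : Fin 3 → ℕ) (hmin : MinGen n) (k k' : ℕ) (hk : 1 ≤ k)
    (hkk : k < k') (h1 : ord n (k * n 2) = k) (h2 : ord n (k' * n 2) = k')
    (hT : Torsion n (k * n 2)) :
    Torsion n (k' * n 2) ∧ tord n (k' * n 2) ≤ tord n (k * n 2) := by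
  obtain ⟨hsm, hgt1, _, _⟩ := hmin
  have hn : ∀ i, 1 ≤ n i := fun i => le_of_lt (hgt1 i)
  set A := {c | 0 < c ∧ ord n (k * n 2) + c < ord n (k * n 2 + c * n 0)} with hA
  have hAne : A.Nonempty := hT
  have hcmem : tord n (k * n 2) ∈ A := Nat.sInf_mem hAne
  obtain ⟨hc0, hc⟩ := hcmem
  set c := tord n (k * n 2)
  have hexpr : ∃ r : Fin 3 → ℕ, ∑ i, r i * n i = k * n 2 + c * n 0 := by
    refine ⟨fun i => if i = 0 then c else if i = 2 then k else 0, ?_⟩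
    simp [Fin.sum_univ_three, add_comm]
  have key : ord n (k * n 2 + c * n 0) + (k' - k) ≤ ord n (k' * n 2 + c * n 0) := by
    have := ord_add_shift n hn (k * n 2 + c * n 0) (k' - k) 2 hexpr
    have heq : k * n 2 + c * n 0 + (k' - k) * n 2 = k' * n 2 + c * n 0 := by
      have : k * n 2 + (k' - k) * n 2 = k' * n 2 := by
        rw [← add_mul, Nat.add_sub_cancel' (le_of_lt hkk)]
      omega
    rwa [heq] at this
  have hlt : ord n (k' * n 2) + c < ord n (k' * n 2 + c * n 0) := by
    have h1' : k + c < ord n (k * n 2 + c * n 0) := by rw [h1] at hc; exact hc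
    rw [h2]; omega
  refine ⟨⟨c, hc0, hlt⟩, Nat.sInf_le ⟨hc0, hlt⟩⟩
end

section
/- Let S be a numerical semigroup with a unique Betti element, so that there exist pairwise relatively prime integers k_1 > k_2 > ... > k_b > 1 with minimal generators n_i = ∏_{j ≠ i} k_j. Then the Apéry set of S with respect to n_1 is exactly Ap(S) = {λ_2 n_2 + ... + λ_b n_b : 0 ≤ λ_i ≤ k_i − 1}. -/
open Finset

/-!
Reducing modulo `k j` kills every generator except `n j`, which is a unit there, so an
expression `∑ λᵢ nᵢ` determines each `λⱼ` modulo `k j` (`j ≠ 0`). Hence a box element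
`∑ λᵢ nᵢ` with `λ₀ = 0`, `λᵢ < kᵢ` cannot equal `t + n₀` with `t ∈ S`: every coefficient
of `t` would dominate the corresponding `λᵢ`. Conversely, given `s ∈ Ap(S)`, choose
`λⱼ ≡ s · nⱼ⁻¹ (mod kⱼ)`; by the Chinese remainder theorem the box element is congruent
to `s` modulo `n₀ = ∏_{j ≠ 0} kⱼ`, and two Apéry elements in the same class coincide.
-/

theorem Nat.modEq_prod_of_pairwise_coprime {ι : Type*} {t : Finset ι} {k : ι → ℕ} {a b : ℕ}
    (hk : (t : Set ι).Pairwise fun i j => Nat.Coprime (k i) (k j))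
    (h : ∀ j ∈ t, a ≡ b [MOD k j]) :
    a ≡ b [MOD ∏ j ∈ t, k j] := by
  rw [Nat.modEq_iff_dvd]
  push_cast
  exact Finset.prod_dvd_of_coprime
    (fun i hi j hj hij => Nat.isCoprime_iff_coprime.2 (hk hi hj hij))
    fun j hj => Nat.modEq_iff_dvd.1 (h j hj)

section Apery

variable {b : ℕ} {n : Fin b → ℕ}

lemma memS_add {s t : ℕ} (hs : memS n s) (ht : memS n t) : memS n (s + t) := by
  obtain ⟨r, rfl⟩ := hs
  obtain ⟨r', rfl⟩ := ht
  exact ⟨r + r', by simp [add_mul, sum_add_distrib]⟩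

lemma memS_add_mul {s ν : ℕ} (hs : memS n s) (hν : memS n ν) (m : ℕ) :
    memS n (s + m * ν) := by
  induction m with
  | zero => simpa using hs
  | succ m ih => simpa [add_mul, ← add_assoc] using memS_add ih hν

lemma memS_generator (i : Fin b) : memS n (n i) :=
  ⟨Pi.single i 1, by simp [Pi.single_apply]⟩

lemma eq_of_mem_Ap_of_modEq {ν s w : ℕ} (hν : memS n ν) (hs : s ∈ Ap n ν) (hw : w ∈ Ap n ν)
    (h : s ≡ w [MOD ν]) : s = w := by
  wlog hsw : s ≤ w generalizing s w
  · exact (this hw hs h.symm (le_of_not_ge hsw)).symm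
  obtain ⟨m, hm⟩ := (Nat.modEq_iff_dvd' hsw).1 h
  cases m with
  | zero => omega
  | succ m =>
    have hw_eq : w = s + m * ν + ν := by
      rw [Nat.sub_eq_iff_eq_add' hsw] at hm
      rw [hm]
      ring
    exact absurd ⟨s + m * ν, memS_add_mul hs.1 hν m, hw_eq.symm⟩ hw.2

end Apery

section Box

variable {b : ℕ} {k n : Fin b → ℕ}

lemma sum_mul_modEq_of_dvd {j : Fin b} (hdvd : ∀ i, i ≠ j → k j ∣ n i) (x : Fin b → ℕ) :
    ∑ i, x i * n i ≡ x j * n j [MOD k j] := by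
  rw [← add_sum_erase _ _ (mem_univ j)]
  simpa using (Nat.ModEq.refl (x j * n j)).add
    (Nat.modEq_zero_iff_dvd.2 (dvd_sum fun i hi => (hdvd i (ne_of_mem_erase hi)).mul_left _))

variable [NeZero b]

lemma box_mem_Ap (hdvd : ∀ i j, i ≠ j → k j ∣ n i) (hcopn : ∀ j, Nat.Coprime (k j) (n j))
    (hpos : 0 < n 0) {lam : Fin b → ℕ} (h0 : lam 0 = 0) (hlam : ∀ i, lam i < k i) :
    ∑ i, lam i * n i ∈ Ap n (n 0) := by
  refine ⟨⟨lam, rfl⟩, ?_⟩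
  rintro ⟨_, ⟨r, rfl⟩, hr⟩
  have hle : ∀ j, lam j ≤ r j := by
    intro j
    rcases eq_or_ne j 0 with rfl | hj
    · simp [h0]
    have hdvd_j : ∀ i, i ≠ j → k j ∣ n i := fun i hi => hdvd i j hi
    have hshift : ∑ i, r i * n i + n 0 ≡ r j * n j [MOD k j] := by
      simpa using (sum_mul_modEq_of_dvd hdvd_j r).add
        (Nat.modEq_zero_iff_dvd.2 (hdvd 0 j hj.symm))
    have hres : r j ≡ lam j [MOD k j] := Nat.ModEq.cancel_right_of_coprime (hcopn j)
      (hshift.symm.trans (hr ▸ sum_mul_modEq_of_dvd hdvd_j lam))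
    calc lam j = r j % k j := by rw [hres, Nat.mod_eq_of_lt (hlam j)]
      _ ≤ r j := Nat.mod_le _ _
  have : ∑ i, lam i * n i ≤ ∑ i, r i * n i :=
    sum_le_sum fun i _ => Nat.mul_le_mul_right _ (hle i)
  omega

lemma exists_box_eq_of_mem_Ap (hk : ∀ i, 0 < k i)
    (hcop : ((univ.erase 0 : Finset (Fin b)) : Set (Fin b)).Pairwise
      fun i j => Nat.Coprime (k i) (k j))
    (hn0 : n 0 = ∏ j ∈ univ.erase 0, k j)
    (hdvd : ∀ i j, i ≠ j → k j ∣ n i) (hcopn : ∀ j, Nat.Coprime (k j) (n j))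
    {s : ℕ} (hs : s ∈ Ap n (n 0)) :
    ∃ lam : Fin b → ℕ, lam 0 = 0 ∧ (∀ i, lam i < k i) ∧ s = ∑ i, lam i * n i := by
  have hres : ∀ j, ∃ l < k j, l * n j ≡ s [MOD k j] := fun j => by
    obtain ⟨l, hl, hls⟩ := Nat.exists_mul_mod_eq_of_coprime s (hcopn j).symm (hk j).ne'
    exact ⟨l, hl, by rw [mul_comm]; exact hls⟩
  choose l hl hls using hres
  set lam := Function.update l 0 0 with hlam
  have hbox : ∀ i, lam i < k i := fun i => by
    rcases eq_or_ne i 0 with rfl | hi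
    · simpa [hlam] using hk 0
    · simpa [hlam, hi] using hl i
  have hpos : 0 < n 0 := hn0 ▸ prod_pos fun j _ => hk j
  refine ⟨lam, by simp [hlam], hbox, eq_of_mem_Ap_of_modEq (memS_generator 0) hs
    (box_mem_Ap hdvd hcopn hpos (by simp [hlam]) hbox) ?_⟩
  rw [hn0]
  refine Nat.modEq_prod_of_pairwise_coprime hcop fun j hj => ?_
  calc s ≡ l j * n j [MOD k j] := (hls j).symm
    _ = lam j * n j := by rw [hlam, Function.update_of_ne (ne_of_mem_erase hj)]
    _ ≡ ∑ i, lam i * n i [MOD k j] :=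
      (sum_mul_modEq_of_dvd (fun i hi => hdvd i j hi) lam).symm

end Box

theorem stmt10_general {b : ℕ} [NeZero b] (k n : Fin b → ℕ)
    (hk : ∀ i, 1 < k i)
    (hcop : ∀ i j, i ≠ j → Nat.Coprime (k i) (k j))
    (hn : ∀ i, n i = ∏ j ∈ Finset.univ.erase i, k j) :
    Ap n (n 0) = {s | ∃ lam : Fin b → ℕ, lam 0 = 0 ∧
      (∀ i, lam i ≤ k i - 1) ∧ s = ∑ i, lam i * n i} := by
  have hdvd : ∀ i j, i ≠ j → k j ∣ n i := fun i j hij =>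
    hn i ▸ dvd_prod_of_mem _ (mem_erase.2 ⟨hij.symm, mem_univ j⟩)
  have hcopn : ∀ j, Nat.Coprime (k j) (n j) := fun j =>
    hn j ▸ Nat.Coprime.prod_right fun i hi => hcop j i (ne_of_mem_erase hi).symm
  have hk_pos : ∀ i, 0 < k i := fun i => (hk i).pos
  ext s
  constructor
  · intro hs
    obtain ⟨lam, h0, hlam, rfl⟩ := exists_box_eq_of_mem_Ap hk_pos
      (fun i _ j _ hij => hcop i j hij) (hn 0) hdvd hcopn hs
    exact ⟨lam, h0, fun i => Nat.le_sub_one_of_lt (hlam i), rfl⟩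
  · rintro ⟨lam, h0, hlam, rfl⟩
    exact box_mem_Ap hdvd hcopn (hn 0 ▸ prod_pos fun j _ => hk_pos j) h0
      fun i => Nat.lt_of_le_sub_one (hk_pos i) (hlam i)

theorem stmt10 {b : ℕ} [NeZero b] (hb : 2 ≤ b) (k n : Fin b → ℕ)
    (hk : ∀ i, 1 < k i) (hanti : StrictAnti k)
    (hcop : ∀ i j, i ≠ j → Nat.Coprime (k i) (k j))
    (hn : ∀ i, n i = ∏ j ∈ Finset.univ.erase i, k j) :
    Ap n (n 0) = {s | ∃ lam : Fin b → ℕ, lam 0 = 0 ∧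
      (∀ i, lam i ≤ k i - 1) ∧ s = ∑ i, lam i * n i} :=
  stmt10_general k n hk hcop hn
end

section
/- Let S be a numerical semigroup with a unique Betti element, generated by n_i = ∏_{j ≠ i} k_j for pairwise coprime k_1 > ... > k_b > 1. Then the element (k_2 − 1)n_2 + ... + (k_b − 1)n_b is the unique maximal element of Ap(S) with respect to the order x ≤ y iff y − x ∈ S; consequently S is symmetric. -/
open Finset

private lemma update_mul' {b : ℕ} (r n : Fin b → ℕ) (j : Fin b) (v : ℕ) :
    (fun i => Function.update r j v i * n i) =
      Function.update (fun i => r i * n i) j (v * n j) := by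
  funext i
  by_cases h : i = j
  · subst h; simp
  · simp [h]

/-- If x has a representation with positive coefficient at 0, then x - n 0 ∈ S. -/
private lemma exists_pred' {b : ℕ} [NeZero b] (n : Fin b → ℕ) (x : ℕ) (r : Fin b → ℕ)
    (hr : ∑ i, r i * n i = x) (h0 : 0 < r 0) :
    ∃ t, memS n t ∧ t + n 0 = x := by
  obtain ⟨m, hm⟩ : ∃ m, r 0 = m + 1 := ⟨r 0 - 1, by omega⟩
  refine ⟨∑ i, Function.update r 0 m i * n i, ⟨_, rfl⟩, ?_⟩
  rw [← hr, update_mul', Finset.sum_update_of_mem (Finset.mem_univ 0),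
    ← Finset.add_sum_erase _ (fun i => r i * n i) (Finset.mem_univ 0), hm,
    ← Finset.erase_eq]
  ring

/-- Any representation of an Apéry element has r 0 = 0 and r j < k j for j ≠ 0. -/
private lemma ap_rep' {b : ℕ} [NeZero b] (k n : Fin b → ℕ) (hk0 : 0 < k 0)
    (hN : ∀ j, k 0 * n 0 = k j * n j)
    (x : ℕ) (hx : x ∈ Ap n (n 0)) (r : Fin b → ℕ) (hr : ∑ i, r i * n i = x) :
    r 0 = 0 ∧ ∀ j, j ≠ (0 : Fin b) → r j < k j := by
  have hnot := hx.2
  constructor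
  · by_contra h
    exact hnot (exists_pred' n x r hr (by omega))
  · intro j hj
    by_contra h
    push_neg at h
    obtain ⟨m, hm⟩ : ∃ m, r j = k j + m := ⟨r j - k j, by omega⟩
    set r' : Fin b → ℕ :=
      Function.update (Function.update r j m) 0 (r 0 + k 0) with hr'
    have hsum : ∑ i, r' i * n i = x := by
      rw [hr', update_mul', Finset.sum_update_of_mem (Finset.mem_univ 0),
        update_mul', ← Finset.erase_eq,
        Finset.sum_update_of_mem (Finset.mem_erase.2 ⟨hj, Finset.mem_univ j⟩),
        ← hr,
        ← Finset.add_sum_erase _ (fun i => r i * n i) (Finset.mem_univ 0),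
        ← Finset.add_sum_erase _ (fun i => r i * n i)
          (Finset.mem_erase.2 ⟨hj, Finset.mem_univ j⟩),
        ← Finset.erase_eq, hm, add_mul, hN j]
      ring
    have : r' 0 = r 0 + k 0 := by simp [hr']
    exact hnot (exists_pred' n x r' hsum (by omega))

theorem stmt11 {b : ℕ} [NeZero b] (hb : 2 ≤ b) (k n : Fin b → ℕ)
    (hk : ∀ i, 1 < k i) (hanti : StrictAnti k)
    (hcop : ∀ i j, i ≠ j → Nat.Coprime (k i) (k j))
    (hn : ∀ i, n i = ∏ j ∈ Finset.univ.erase i, k j) :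
    (∑ i ∈ Finset.univ.erase 0, (k i - 1) * n i) ∈ Ap n (n 0) ∧
    ∀ x ∈ Ap n (n 0), ∃ d, memS n d ∧
      x + d = ∑ i ∈ Finset.univ.erase 0, (k i - 1) * n i := by
  have h0lt : ∀ i, 0 < n i := fun i => by
    rw [hn i]; exact Finset.prod_pos fun j _ => lt_trans one_pos (hk j)
  have hN : ∀ j, k 0 * n 0 = k j * n j := by
    intro j
    rw [hn 0, hn j, Finset.mul_prod_erase _ _ (Finset.mem_univ 0),
      Finset.mul_prod_erase _ _ (Finset.mem_univ j)]
  have hdvd : ∀ i j : Fin b, i ≠ j → k j ∣ n i := fun i j hij => by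
    rw [hn i]
    exact Finset.dvd_prod_of_mem k (Finset.mem_erase.2 ⟨Ne.symm hij, Finset.mem_univ j⟩)
  have hcopn : ∀ j, Nat.Coprime (n j) (k j) := fun j => by
    rw [hn j]
    exact Nat.Coprime.prod_left fun i hi => hcop i j (Finset.mem_erase.1 hi).1
  set M := ∑ i ∈ Finset.univ.erase 0, (k i - 1) * n i with hM
  have hsplit : ∀ f : Fin b → ℕ, ∑ i, (if i = 0 then 0 else f i) * n i
      = ∑ i ∈ Finset.univ.erase 0, f i * n i := by
    intro f
    rw [← Finset.add_sum_erase _ (fun i => (if i = 0 then 0 else f i) * n i)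
      (Finset.mem_univ 0), if_pos rfl, zero_mul, zero_add]
    exact Finset.sum_congr rfl fun i hi => by rw [if_neg (Finset.mem_erase.1 hi).1]
  have hMmem : memS n M := ⟨fun i => if i = 0 then 0 else k i - 1, hsplit _⟩
  constructor
  · refine ⟨hMmem, ?_⟩
    rintro ⟨t, ⟨s, hs⟩, ht⟩
    have hsge : ∀ j : Fin b, j ≠ 0 → k j - 1 ≤ s j := by
      intro j hj
      have heq : ∑ i, s i * n i + n 0 = M := by rw [hs, ht]
      rw [← Finset.add_sum_erase _ (fun i => s i * n i) (Finset.mem_univ j), hM,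
        ← Finset.add_sum_erase _ (fun i => (k i - 1) * n i)
          (Finset.mem_erase.2 ⟨hj, Finset.mem_univ j⟩)] at heq
      set A := ∑ i ∈ Finset.univ.erase j, s i * n i with hA
      set B := ∑ i ∈ (Finset.univ.erase 0).erase j, (k i - 1) * n i with hB
      have d1 : k j ∣ A + n 0 := by
        refine dvd_add (Finset.dvd_sum fun i hi =>
          Dvd.dvd.mul_left (hdvd i j (Finset.mem_erase.1 hi).1) _) (hdvd 0 j (Ne.symm hj))
      have d2 : k j ∣ B := Finset.dvd_sum fun i hi =>
        Dvd.dvd.mul_left (hdvd i j (Finset.mem_erase.1 hi).1) _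
      have h1 : s j * n j ≡ (k j - 1) * n j [MOD k j] := by
        calc s j * n j ≡ s j * n j + (A + n 0) [MOD k j] := by
              have := Nat.ModEq.add_left (s j * n j) ((Nat.modEq_zero_iff_dvd).2 d1)
              rw [add_zero] at this; exact this.symm
          _ = (k j - 1) * n j + B := by rw [← add_assoc]; exact heq
          _ ≡ (k j - 1) * n j + 0 [MOD k j] :=
              Nat.ModEq.add_left _ ((Nat.modEq_zero_iff_dvd).2 d2)
          _ = (k j - 1) * n j := add_zero _
      have h2 : s j ≡ k j - 1 [MOD k j] :=
        Nat.ModEq.cancel_right_of_coprime (hcopn j).symm h1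
      have h3 : s j % k j = (k j - 1) % k j := h2
      have h4 : (k j - 1) % k j = k j - 1 := Nat.mod_eq_of_lt (by have := hk j; omega)
      have h5 := Nat.mod_le (s j) (k j)
      have := hk j
      omega
    have hMle : M ≤ t := by
      rw [← hs, hM]
      calc ∑ i ∈ Finset.univ.erase 0, (k i - 1) * n i
          ≤ ∑ i ∈ Finset.univ.erase 0, s i * n i :=
            Finset.sum_le_sum fun i hi =>
              Nat.mul_le_mul_right _ (hsge i (Finset.mem_erase.1 hi).1)
        _ ≤ ∑ i, s i * n i :=
            Finset.sum_le_sum_of_subset (Finset.erase_subset _ _)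
    have := h0lt 0
    omega
  · intro x hx
    obtain ⟨r, hr⟩ := hx.1
    obtain ⟨h00, hlt⟩ := ap_rep' k n (lt_trans one_pos (hk 0)) hN x hx r hr
    refine ⟨∑ i ∈ Finset.univ.erase 0, (k i - 1 - r i) * n i,
      ⟨fun i => if i = 0 then 0 else k i - 1 - r i, hsplit _⟩, ?_⟩
    rw [← hr, ← Finset.add_sum_erase _ (fun i => r i * n i) (Finset.mem_univ 0), h00,
      zero_mul, zero_add, ← Finset.sum_add_distrib]
    exact Finset.sum_congr rfl fun i hi => by
      have h1 := hlt i (Finset.mem_erase.1 hi).1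
      have h2 := hk i
      rw [← add_mul]
      congr 1
      omega
end

section
/- Let S be a numerical semigroup with a unique Betti element, generated by n_i = ∏_{j ≠ i} k_j for pairwise coprime k_1 > ... > k_b > 1. Then the reduction number of S (the least r with (r+1)M = n_1 + rM, M = S\{0}) equals ∑_{i=2}^{b}(k_i − 1). -/
open Finset

set_option linter.unusedSectionVars false
set_option linter.unusedVariables false

section aux
variable {b : ℕ} [NeZero b] (k n : Fin b → ℕ)
variable {b : ℕ} [NeZero b] (k n : Fin b → ℕ)

lemma aux_kn (hn : ∀ i, n i = ∏ j ∈ Finset.univ.erase i, k j) (i : Fin b) :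
    k i * n i = ∏ j, k j := by
  rw [hn]; exact Finset.mul_prod_erase univ k (mem_univ i)

lemma aux_dvd (hn : ∀ i, n i = ∏ j ∈ Finset.univ.erase i, k j) {i j : Fin b}
    (hij : i ≠ j) : k i ∣ n j := by
  rw [hn]; exact Finset.dvd_prod_of_mem k (by simp [Finset.mem_erase, hij])

lemma aux_cop (hcop : ∀ i j, i ≠ j → Nat.Coprime (k i) (k j))
    (hn : ∀ i, n i = ∏ j ∈ Finset.univ.erase i, k j) (i : Fin b) :
    Nat.Coprime (n i) (k i) := by
  rw [hn]
  exact Nat.Coprime.prod_left fun j hj => hcop j i (Finset.mem_erase.mp hj).1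

lemma aux_unique (hk : ∀ i, 1 < k i)
    (hcop : ∀ i j, i ≠ j → Nat.Coprime (k i) (k j))
    (hn : ∀ i, n i = ∏ j ∈ Finset.univ.erase i, k j)
    (c q : Fin b → ℕ) (hc : ∀ i, c i < k i)
    (h : ∑ i, q i * n i = ∑ i, c i * n i) : q = c := by
  have hmod : ∀ i, q i % k i = c i := by
    intro i
    have hki : 0 < k i := lt_trans one_pos (hk i)
    have hsplit : ∀ f : Fin b → ℕ, (∑ j, f j * n j) % k i = f i * n i % k i := by
      intro f
      rw [← Finset.add_sum_erase univ (fun j => f j * n j) (mem_univ i), Nat.add_mod]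
      have hdvd : k i ∣ ∑ j ∈ univ.erase i, f j * n j :=
        Finset.dvd_sum fun j hj =>
          Dvd.dvd.mul_left (aux_dvd k n hn (Finset.mem_erase.mp hj).1.symm) (f j)
      obtain ⟨d, hd⟩ := hdvd
      rw [hd, Nat.mul_mod_right, add_zero, Nat.mod_mod_of_dvd _ (dvd_refl _)]
    have hmm : q i * n i ≡ c i * n i [MOD k i] := by
      unfold Nat.ModEq
      rw [← hsplit q, ← hsplit c, h]
    have hco := Nat.ModEq.cancel_right_of_coprime (c := n i)
      (by simpa [Nat.Coprime, Nat.coprime_comm] using (aux_cop k n hcop hn i).symm) hmm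
    calc q i % k i = c i % k i := hco
      _ = c i := Nat.mod_eq_of_lt (hc i)
  have hdecomp : ∀ i, q i = c i + k i * (q i / k i) := fun i => by
    conv_lhs => rw [← Nat.mod_add_div (q i) (k i)]
    rw [hmod i]
  have hsum : ∑ i, q i * n i = ∑ i, c i * n i + (∑ i, q i / k i) * ∏ j, k j := by
    calc ∑ i, q i * n i = ∑ i, (c i * n i + (q i / k i) * (k i * n i)) := by
          refine Finset.sum_congr rfl fun i _ => ?_
          conv_lhs => rw [hdecomp i]
          ring
      _ = ∑ i, c i * n i + ∑ i, (q i / k i) * (k i * n i) := Finset.sum_add_distrib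
      _ = ∑ i, c i * n i + ∑ i, (q i / k i) * ∏ j, k j := by
          congr 1; exact Finset.sum_congr rfl fun i _ => by rw [aux_kn k n hn i]
      _ = ∑ i, c i * n i + (∑ i, q i / k i) * ∏ j, k j := by rw [Finset.sum_mul]
  have hP : 0 < ∏ j, k j := Finset.prod_pos fun i _ => lt_trans one_pos (hk i)
  have hz : (∑ i, q i / k i) * ∏ j, k j = 0 := by omega
  have hs0 : ∑ i, q i / k i = 0 := by
    rcases Nat.mul_eq_zero.mp hz with h' | h'
    · exact h'
    · omega
  have hm0 : ∀ i, q i / k i = 0 := fun i =>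
    Finset.sum_eq_zero_iff.mp hs0 i (mem_univ i)
  funext i
  rw [hdecomp i, hm0 i, mul_zero, add_zero]


lemma aux_normalize (hk : ∀ i, 1 < k i) (hanti : StrictAnti k)
    (hn : ∀ i, n i = ∏ j ∈ Finset.univ.erase i, k j) :
    ∀ (m : ℕ) (r : Fin b → ℕ), (∑ i ∈ univ.erase (0 : Fin b), r i) ≤ m →
    ∃ q : Fin b → ℕ, (∀ i ∈ univ.erase (0 : Fin b), q i < k i) ∧
      ∑ i, r i ≤ ∑ i, q i ∧ ∑ i, q i * n i = ∑ i, r i * n i := by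
  intro m
  induction m with
  | zero =>
    intro r hr
    refine ⟨r, fun i hi => ?_, le_refl _, rfl⟩
    have h0 : r i = 0 := by
      have := Finset.sum_eq_zero_iff.mp (Nat.le_zero.mp hr) i hi
      exact this
    rw [h0]; exact lt_trans one_pos (hk i)
  | succ m ih =>
    intro r hr
    by_cases hall : ∀ i ∈ univ.erase (0 : Fin b), r i < k i
    · exact ⟨r, hall, le_refl _, rfl⟩
    · push_neg at hall
      obtain ⟨i, hi, hki⟩ := hall
      have hi0 : i ≠ 0 := (Finset.mem_erase.mp hi).1
      set r' : Fin b → ℕ :=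
        fun j => if j = 0 then r 0 + k 0 else if j = i then r i - k i else r j with hr'
      have h0 : r' 0 = r 0 + k 0 := by simp [hr']
      have hii : r' i = r i - k i := by simp [hr', hi0]
      have hoth : ∀ j, j ≠ 0 → j ≠ i → r' j = r j := fun j h1 h2 => by simp [hr', h1, h2]
      have hdec : ∀ f : Fin b → ℕ,
          ∑ j, f j = f 0 + (f i + ∑ j ∈ (univ.erase (0:Fin b)).erase i, f j) := by
        intro f
        rw [← Finset.add_sum_erase univ f (mem_univ 0), ← Finset.add_sum_erase _ f hi]
      have hdec' : ∀ f : Fin b → ℕ,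
          ∑ j ∈ univ.erase (0:Fin b), f j = f i + ∑ j ∈ (univ.erase (0:Fin b)).erase i, f j :=
        fun f => (Finset.add_sum_erase _ f hi).symm
      have hrest : ∀ g : Fin b → ℕ,
          ∑ j ∈ (univ.erase (0:Fin b)).erase i, r' j * g j
            = ∑ j ∈ (univ.erase (0:Fin b)).erase i, r j * g j := by
        intro g
        refine Finset.sum_congr rfl fun j hj => ?_
        have hj1 := (Finset.mem_erase.mp hj).1
        have hj2 := (Finset.mem_erase.mp (Finset.mem_erase.mp hj).2).1
        rw [hoth j hj2 hj1]
      have hk0i : k i < k 0 := hanti ((Fin.pos_iff_ne_zero' i).mpr hi0)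
      -- erase-0 sum bound
      have hb1 : ∑ j ∈ univ.erase (0:Fin b), r' j ≤ m := by
        have e1 := hdec' r'
        have e2 := hdec' r
        have e3 := hrest (fun _ => 1)
        simp only [mul_one] at e3
        have := hk i
        omega
      obtain ⟨q, hq1, hq2, hq3⟩ := ih r' hb1
      refine ⟨q, hq1, ?_, ?_⟩
      · -- ∑ r ≤ ∑ r' ≤ ∑ q
        have e1 := hdec r'
        have e2 := hdec r
        have e3 := hrest (fun _ => 1)
        simp only [mul_one] at e3
        omega
      · rw [hq3]
        -- ∑ r' n = ∑ r n
        have e1 := hdec (fun j => r' j * n j)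
        have e2 := hdec (fun j => r j * n j)
        have e3 := hrest n
        have ekn : k 0 * n 0 = k i * n i := by
          rw [aux_kn k n hn 0, aux_kn k n hn i]
        have emul0 : r' 0 * n 0 = r 0 * n 0 + k 0 * n 0 := by rw [h0, add_mul]
        have emuli : r' i * n i + k i * n i = r i * n i := by
          rw [hii, Nat.sub_mul]
          have : k i * n i ≤ r i * n i := Nat.mul_le_mul_right _ hki
          omega
        omega

lemma aux_coeff {b : ℕ} (f : Fin b → ℕ) : ∀ m, m ≤ ∑ i, f i →
    ∃ c : Fin b → ℕ, (∀ i, c i ≤ f i) ∧ ∑ i, c i = m := by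
  intro m
  induction m with
  | zero => exact fun _ => ⟨fun _ => 0, fun i => Nat.zero_le _, by simp⟩
  | succ m ih =>
    intro hm
    obtain ⟨c, hc, hcs⟩ := ih (by omega)
    have hex : ∃ i, c i < f i := by
      by_contra h
      push_neg at h
      have : ∑ i, f i ≤ ∑ i, c i := Finset.sum_le_sum fun i _ => h i
      omega
    obtain ⟨i, hif⟩ := hex
    refine ⟨Function.update c i (c i + 1), fun j => ?_, ?_⟩
    · rcases eq_or_ne j i with h | h
      · subst h; rw [Function.update_self]; omega
      · rw [Function.update_of_ne h]; exact hc j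
    · rw [Finset.sum_update_of_mem (mem_univ i), Finset.sdiff_singleton_eq_erase]
      rw [← Finset.add_sum_erase univ c (mem_univ i)] at hcs
      omega






lemma sum_split0 (f : Fin b → ℕ) :
    ∑ i, f i = f 0 + ∑ i ∈ univ.erase (0 : Fin b), f i :=
  (Finset.add_sum_erase univ f (mem_univ 0)).symm

lemma sum_update0 (q : Fin b → ℕ) (v : ℕ) (w : Fin b → ℕ) :
    ∑ j, Function.update q 0 v j * w j
      = v * w 0 + ∑ j ∈ univ.erase (0 : Fin b), q j * w j := by
  rw [sum_split0 (fun j => Function.update q 0 v j * w j)]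
  simp only [Function.update_self]
  congr 1
  exact Finset.sum_congr rfl fun j hj => by
    rw [Function.update_of_ne (Finset.mem_erase.mp hj).1]
end aux

theorem stmt13 {b : ℕ} [NeZero b] (hb : 2 ≤ b) (k n : Fin b → ℕ)
    (hk : ∀ i, 1 < k i) (hanti : StrictAnti k)
    (hcop : ∀ i j, i ≠ j → Nat.Coprime (k i) (k j))
    (hn : ∀ i, n i = ∏ j ∈ Finset.univ.erase i, k j) :
    redNum n = ∑ i ∈ Finset.univ.erase 0, (k i - 1) := by
  set R := ∑ i ∈ univ.erase (0 : Fin b), (k i - 1) with hRdef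
  have hn0pos : 0 < n 0 := by
    rw [hn]; exact Finset.prod_pos fun j hj => lt_trans one_pos (hk j)
  -- R is in the defining set
  have hmem : powM n (R + 1) = (fun t => n 0 + t) '' powM n R := by
    ext s
    constructor
    · rintro ⟨r, hr1, hr2⟩
      obtain ⟨q, hq1, hq2, hq3⟩ := aux_normalize k n hk hanti hn _ r (le_refl _)
      have hqe : ∑ i ∈ univ.erase (0 : Fin b), q i ≤ R :=
        Finset.sum_le_sum fun i hi => by have h1 := hq1 i hi; omega
      have hdq := sum_split0 q
      have hq0 : 1 ≤ q 0 := by omega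
      refine ⟨∑ i, Function.update q 0 (q 0 - 1) i * n i,
        ⟨Function.update q 0 (q 0 - 1), ?_, rfl⟩, ?_⟩
      · -- R ≤ sum of coefficients
        have e1 := sum_update0 q (q 0 - 1) (fun _ => 1)
        simp only [mul_one] at e1
        omega
      · -- n 0 + value = s
        simp only []
        rw [sum_update0 q (q 0 - 1) n]
        have e2 := sum_split0 (fun i => q i * n i)
        have e3 : (q 0 - 1) * n 0 + n 0 = q 0 * n 0 := by
          rw [Nat.sub_mul]
          have : n 0 ≤ q 0 * n 0 := Nat.le_mul_of_pos_left _ hq0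
          omega
        omega
    · rintro ⟨t, ⟨r, hr1, hr2⟩, hts⟩
      refine ⟨Function.update r 0 (r 0 + 1), ?_, ?_⟩
      · have e1 := sum_update0 r (r 0 + 1) (fun _ => 1)
        simp only [mul_one] at e1
        have e2 := sum_split0 r
        omega
      · rw [sum_update0 r (r 0 + 1) n]
        have e2 := sum_split0 (fun i => r i * n i)
        simp only [] at e2 hts ⊢
        rw [add_mul, one_mul]
        omega
  -- no smaller m is in the defining set
  have hnot : ∀ m, m < R → powM n (m + 1) ≠ (fun t => n 0 + t) '' powM n m := by
    intro m hm heq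
    have hsum : ∑ i : Fin b, (if i = (0 : Fin b) then 0 else k i - 1) = R := by
      rw [sum_split0 (fun i => if i = (0 : Fin b) then 0 else k i - 1)]
      rw [if_pos rfl, zero_add, hRdef]
      exact Finset.sum_congr rfl fun i hi => if_neg (Finset.mem_erase.mp hi).1
    obtain ⟨c, hc1, hc2⟩ := aux_coeff
      (fun i => if i = (0 : Fin b) then 0 else k i - 1) (m + 1)
      (le_of_le_of_eq (show m + 1 ≤ R by omega) hsum.symm)
    have hc0 : c 0 = 0 := by
      have h1 : c 0 ≤ if (0 : Fin b) = 0 then 0 else k 0 - 1 := hc1 0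
      simpa using h1
    have hclt : ∀ i, c i < k i := by
      intro i
      rcases eq_or_ne i 0 with h | h
      · subst h; rw [hc0]; exact lt_trans one_pos (hk 0)
      · have h1 : c i ≤ if i = (0 : Fin b) then 0 else k i - 1 := hc1 i
        rw [if_neg h] at h1
        have := hk i
        omega
    have hs : (∑ i, c i * n i) ∈ powM n (m + 1) := ⟨c, hc2.ge, rfl⟩
    rw [heq] at hs
    obtain ⟨t, ⟨r, hr1, hr2⟩, hts⟩ := hs
    have hqs : ∑ i, Function.update r 0 (r 0 + 1) i * n i = ∑ i, c i * n i := by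
      rw [sum_update0 r (r 0 + 1) n]
      have e2 := sum_split0 (fun i => r i * n i)
      simp only [] at e2 hts ⊢
      rw [add_mul, one_mul]
      omega
    have huniq := aux_unique k n hk hcop hn c _ hclt hqs
    have h0 : Function.update r 0 (r 0 + 1) 0 = c 0 := congrFun huniq 0
    rw [Function.update_self, hc0] at h0
    omega
  -- conclude
  have hTne : {r | powM n (r + 1) = (fun t => n 0 + t) '' powM n r}.Nonempty := ⟨R, hmem⟩
  have hsm := Nat.sInf_mem hTne
  unfold redNum
  rcases lt_or_ge (sInf {r | powM n (r + 1) = (fun t => n 0 + t) '' powM n r}) R with h | h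
  · exact absurd hsm (hnot _ h)
  · exact le_antisymm (Nat.sInf_le hmem) h
end

section
/- Let S = ⟨n_1, n_2⟩ be a numerical semigroup minimally generated by two coprime integers n_1 < n_2. Then the reduction number of S equals n_1 − 1, i.e., min{r : (r+1)M = n_1 + rM} = n_1 − 1, where M = S\{0}. -/
open Finset

theorem stmt14 (n : Fin 2 → ℕ) (h2 : 2 ≤ n 0) (hlt : n 0 < n 1)
    (hcop : Nat.Coprime (n 0) (n 1)) : redNum n = n 0 - 1 := by
  set T : Set ℕ := {r | powM n (r + 1) = (fun t => n 0 + t) '' powM n r} with hT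
  have hmem : n 0 - 1 ∈ T := by
    show powM n (n 0 - 1 + 1) = (fun t => n 0 + t) '' powM n (n 0 - 1)
    have hn0 : n 0 - 1 + 1 = n 0 := by omega
    rw [hn0]
    ext s
    constructor
    · rintro ⟨r, hk, hs⟩
      rw [Fin.sum_univ_two] at hk hs
      by_cases ha : 1 ≤ r 0
      · refine ⟨(r 0 - 1) * n 0 + r 1 * n 1, ⟨![r 0 - 1, r 1], ?_, ?_⟩, ?_⟩
        · simp [Fin.sum_univ_two]; omega
        · simp [Fin.sum_univ_two]
        · simp only
          have : n 0 + ((r 0 - 1) * n 0 + r 1 * n 1)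
              = (r 0 - 1 + 1) * n 0 + r 1 * n 1 := by ring
          rw [this]
          have : r 0 - 1 + 1 = r 0 := by omega
          rw [this, hs]
      · have hb : n 0 ≤ r 1 := by omega
        refine ⟨(n 1 - 1) * n 0 + (r 1 - n 0) * n 1, ⟨![n 1 - 1, r 1 - n 0], ?_, ?_⟩, ?_⟩
        · simp [Fin.sum_univ_two]; omega
        · simp [Fin.sum_univ_two]
        · simp only
          have e1 : n 0 + ((n 1 - 1) * n 0 + (r 1 - n 0) * n 1)
              = (n 1 - 1 + 1) * n 0 + (r 1 - n 0) * n 1 := by ring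
          rw [e1]
          have e2 : n 1 - 1 + 1 = n 1 := by omega
          rw [e2]
          have e3 : r 1 = (r 1 - n 0) + n 0 := by omega
          have : r 0 = 0 := by omega
          rw [this] at hs
          calc n 1 * n 0 + (r 1 - n 0) * n 1 = ((r 1 - n 0) + n 0) * n 1 := by ring
            _ = r 1 * n 1 := by rw [← e3]
            _ = s := by omega
    · rintro ⟨t, ⟨r, hk, hs⟩, hst⟩
      rw [Fin.sum_univ_two] at hk hs
      refine ⟨![r 0 + 1, r 1], ?_, ?_⟩
      · simp [Fin.sum_univ_two]; omega
      · simp only [Fin.sum_univ_two, Matrix.cons_val_zero, Matrix.cons_val_one, Matrix.head_cons]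
        simp only at hst
        rw [add_mul, one_mul]
        omega
  have hnot : ∀ r, r < n 0 - 1 → r ∉ T := by
    intro r hr hrT
    have hs : (r + 1) * n 1 ∈ powM n (r + 1) := by
      refine ⟨![0, r + 1], ?_, ?_⟩ <;> simp [Fin.sum_univ_two]
    rw [hrT] at hs
    obtain ⟨t, ⟨q, hk, hqs⟩, hst⟩ := hs
    rw [Fin.sum_univ_two] at hk hqs
    simp only at hst
    -- n 0 + q0 * n 0 + q1 * n 1 = (r+1) * n 1
    have heq : (q 0 + 1) * n 0 + q 1 * n 1 = (r + 1) * n 1 := by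
      rw [add_mul, one_mul]; omega
    have hb : q 1 ≤ r := by
      by_contra hb
      push_neg at hb
      have : (r + 1) * n 1 ≤ q 1 * n 1 := Nat.mul_le_mul_right _ (by omega)
      have hpos : 0 < (q 0 + 1) * n 0 := Nat.mul_pos (by omega) (by omega)
      omega
    have heq2 : (q 0 + 1) * n 0 = (r + 1 - q 1) * n 1 := by
      have := Nat.sub_mul (r + 1) (q 1) (n 1)
      omega
    have hdvd : n 0 ∣ (r + 1 - q 1) * n 1 := ⟨q 0 + 1, by rw [← heq2]; ring⟩
    have hdvd2 : n 0 ∣ (r + 1 - q 1) := hcop.dvd_of_dvd_mul_right hdvd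
    have hle := Nat.le_of_dvd (by omega) hdvd2
    omega
  have hne : T.Nonempty := ⟨_, hmem⟩
  have h1 : redNum n ≤ n 0 - 1 := Nat.sInf_le hmem
  have h2' : redNum n ∈ T := Nat.sInf_mem hne
  by_contra hne'
  exact hnot _ (by omega) h2'
end

section
/- Let S be a numerical semigroup minimally generated by n_1 < ... < n_b that is balanced, i.e., n_i + n_j = n_{i−1} + n_{j+1} for all i ≠ j in {2, ..., b−1}. Then for each torsion element x ∈ T with tord(x) = 1, any maximal expression x + n_1 = ∑_{i=2}^b s_i n_i in which s_2 is maximal, then s_3 maximal given s_2, etc., has at most one nonzero coefficient s_i with 2 ≤ i ≤ b−1 (i.e., it is of the form s_i n_i + s_b n_b for some single index i). -/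
open Finset

/-- `sc` is the greedy (lexicographically maximal) maximal expression of `s`. -/
def Greedy {b : ℕ} (n : Fin b → ℕ) (s : ℕ) (sc : Fin b → ℕ) : Prop :=
  IsMaxExpr n s sc ∧ ∀ t : Fin b → ℕ, IsMaxExpr n s t →
    ∀ i : Fin b, (∀ j, j < i → t j = sc j) → t i ≤ sc i

/-! If the greedy expression had nonzero coefficients at two inner indices `i < j`, the balance
relation `n i + n j = n (i - 1) + n (j + 1)` would trade one copy each of `n i` and `n j` for
`n (i - 1)` and `n (j + 1)`. This keeps the value and the number of summands, hence maximality, and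
raises the coefficient at `i - 1` while leaving all earlier ones alone, against greediness. -/

section Exchange

variable {b : ℕ} {n : Fin b → ℕ}

lemma sum_add_single_one (r : Fin b → ℕ) (i : Fin b) :
    ∑ k, (r + Pi.single i 1 : Fin b → ℕ) k = ∑ k, r k + 1 := by
  simp [Finset.sum_add_distrib]

lemma sum_add_single_one_mul (r : Fin b → ℕ) (i : Fin b) :
    ∑ k, (r + Pi.single i 1 : Fin b → ℕ) k * n k = ∑ k, r k * n k + n i := by
  simp [add_mul, Finset.sum_add_distrib, Pi.single_apply]

lemma exists_eq_add_single_add_single {r : Fin b → ℕ} {i j : Fin b} (hij : i ≠ j)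
    (hi : r i ≠ 0) (hj : r j ≠ 0) : ∃ u : Fin b → ℕ, r = u + Pi.single i 1 + Pi.single j 1 := by
  refine ⟨r - Pi.single i 1 - Pi.single j 1, funext fun k => ?_⟩
  by_cases hki : k = i <;> by_cases hkj : k = j <;> subst_vars <;>
    simp_all <;> omega

lemma IsMaxExpr.exchange {s : ℕ} {u : Fin b → ℕ} {i j i' j' : Fin b}
    (hu : IsMaxExpr n s (u + Pi.single i 1 + Pi.single j 1))
    (hbal : n i + n j = n i' + n j') :
    IsMaxExpr n s (u + Pi.single i' 1 + Pi.single j' 1) := by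
  simp only [IsMaxExpr, sum_add_single_one_mul, sum_add_single_one] at hu ⊢
  omega

lemma Greedy.eq_zero_or_eq_zero {s : ℕ} {sc : Fin b → ℕ} (hsc : Greedy n s sc)
    {i j i' j' : Fin b} (hij : i ≠ j) (hi' : i' < i) (hj' : i' < j) (hi'j' : i' ≤ j')
    (hbal : n i + n j = n i' + n j') : sc i = 0 ∨ sc j = 0 := by
  by_contra! hne
  obtain ⟨u, rfl⟩ := exists_eq_add_single_add_single hij hne.1 hne.2
  have hmax := hsc.1.exchange hbal
  have hagree : ∀ k < i', (u + Pi.single i' 1 + Pi.single j' 1 : Fin b → ℕ) k =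
      (u + Pi.single i 1 + Pi.single j 1 : Fin b → ℕ) k := by
    intro k hk
    simp [hk.ne, (hk.trans hi').ne, (hk.trans hj').ne, (hk.trans_le hi'j').ne]
  have hle := hsc.2 _ hmax i' hagree
  simp [Pi.single_apply, hi'.ne, hj'.ne] at hle
  omega

end Exchange

theorem stmt19 {b : ℕ} [NeZero b] (n : Fin b → ℕ)
    (hbal : ∀ (i j : Fin b) (hi1 : 1 ≤ (i : ℕ)) (hi2 : (i : ℕ) < b - 1)
      (hj1 : 1 ≤ (j : ℕ)) (hj2 : (j : ℕ) < b - 1), i ≠ j →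
      n i + n j = n ⟨(i : ℕ) - 1, by have := i.isLt; omega⟩ +
        n ⟨(j : ℕ) + 1, by have := j.isLt; omega⟩)
    (x : ℕ)
    (sc : Fin b → ℕ) (hsc : Greedy n (x + n 0) sc) :
    ∀ i j : Fin b, 1 ≤ (i : ℕ) → (i : ℕ) < b - 1 → 1 ≤ (j : ℕ) →
      (j : ℕ) < b - 1 → sc i ≠ 0 → sc j ≠ 0 → i = j := by
  intro i j hi1 hi2 hj1 hj2 hsi hsj
  by_contra hne
  wlog hlt : i < j generalizing i j
  · exact this j i hj1 hj2 hi1 hi2 hsj hsi (Ne.symm hne) ((not_lt.mp hlt).lt_of_ne' hne)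
  have hi' : (⟨i - 1, by omega⟩ : Fin b) < i := Fin.lt_def.mpr (by dsimp only; omega)
  have hi'j' : (⟨i - 1, by omega⟩ : Fin b) ≤ ⟨j + 1, by omega⟩ :=
    Fin.le_def.mpr (by dsimp only; omega)
  exact (hsc.eq_zero_or_eq_zero hne hi' (hi'.trans hlt) hi'j'
    (hbal i j hi1 hi2 hj1 hj2 hne)).elim hsi hsj
end
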